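/- Let n ≥ 2, r = ⌊n/2⌋, s = ⌈n/2⌉, d = 2rs, and t = 1/(4n²). Let P₀ = diag(I_r, 0) be the block projector on ℂⁿ = ℂʳ ⊕ ℂˢ, and for (a,b) ∈ {1,…,r}×{1,…,s} let ψᴿ_{a,b} = (e_a + e_{r+b})/√2 and ψᴵ_{a,b} = (e_a + i·e_{r+b})/√2. For each pair of sign patterns η = (ηᴿ_{a,b}, ηᴵ_{a,b})_{(a,b)} ∈ {−1,+1}^d, define the complex r×s matrix X_η by (X_η)_{a,b} = ηᴿ_{a,b} − i·ηᴵ_{a,b}, the skew-Hermitian matrix K_η with zero diagonal blocks, upper-right block X_η, and lower-left block −X_η†, and the unitary U_η = exp(t·K_η). Then for every η and every (a,b): ⟨ψᴿ_{a,b}, U_η† P₀ U_η ψᴿ_{a,b}⟩ > 1/2 if and only if ηᴿ_{a,b} = +1, and ⟨ψᴵ_{a,b}, U_η† P₀ U_η ψᴵ_{a,b}⟩ > 1/2 if and only if ηᴵ_{a,b} = +1. -/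

import Mathlib

open scoped Matrix

/-- The block projector `P₀ = diag(I_r, 0)` on `ℂⁿ = ℂʳ ⊕ ℂˢ`. -/
def blockProj (r s : ℕ) : Matrix (Fin r ⊕ Fin s) (Fin r ⊕ Fin s) ℂ :=
  Matrix.fromBlocks 1 0 0 0

/-- The test vector `ψᴿ_{a,b} = (e_a + e_{r+b})/√2` in `ℂⁿ = ℂʳ ⊕ ℂˢ`. -/
noncomputable def psiR (r s : ℕ) (a : Fin r) (b : Fin s) : (Fin r ⊕ Fin s) → ℂ :=
  fun j => match j with
  | Sum.inl a' => if a' = a then ((Real.sqrt 2 : ℝ) : ℂ)⁻¹ else 0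
  | Sum.inr b' => if b' = b then ((Real.sqrt 2 : ℝ) : ℂ)⁻¹ else 0

/-- The test vector `ψᴵ_{a,b} = (e_a + i·e_{r+b})/√2` in `ℂⁿ = ℂʳ ⊕ ℂˢ`. -/
noncomputable def psiI (r s : ℕ) (a : Fin r) (b : Fin s) : (Fin r ⊕ Fin s) → ℂ :=
  fun j => match j with
  | Sum.inl a' => if a' = a then ((Real.sqrt 2 : ℝ) : ℂ)⁻¹ else 0
  | Sum.inr b' => if b' = b then Complex.I * ((Real.sqrt 2 : ℝ) : ℂ)⁻¹ else 0

/-! ### Auxiliary lemmas -/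

/-- Second-order Taylor remainder bound for the exponential in a Banach algebra. -/
lemma measOrbit.exp_tail {𝔸 : Type*} [NormedRing 𝔸] [NormedAlgebra ℂ 𝔸] [CompleteSpace 𝔸]
    [NormOneClass 𝔸] (x : 𝔸) (hx : ‖x‖ < 1) :
    ‖NormedSpace.exp x - 1 - x‖ ≤ ‖x‖^2 / (2 * (1 - ‖x‖)) := by
  have hsum : Summable fun n : ℕ => (((n.factorial : ℕ) : ℂ))⁻¹ • x ^ n :=
    NormedSpace.expSeries_summable' x
  have h0 : (0:ℝ) ≤ ‖x‖ := norm_nonneg x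
  have key := Summable.sum_add_tsum_nat_add 2 hsum
  have hexp : NormedSpace.exp x = ∑' n : ℕ, (((n.factorial : ℕ) : ℂ)⁻¹) • x ^ n := by
    rw [NormedSpace.exp_eq_tsum (𝕂 := ℂ)]
  have hfin : ∑ i ∈ Finset.range 2, ((i.factorial : ℕ) : ℂ)⁻¹ • x ^ i = 1 + x := by
    simp [Finset.sum_range_succ]
  have heq : NormedSpace.exp x - 1 - x = ∑' n : ℕ, (((n+2).factorial : ℕ) : ℂ)⁻¹ • x ^ (n+2) := by
    rw [hexp, ← key, hfin]; abel
  rw [heq]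
  have hmaj : ∀ n : ℕ, ‖(((n+2).factorial : ℕ) : ℂ)⁻¹ • x ^ (n+2)‖ ≤ ‖x‖^(n+2) / 2 := by
    intro n
    rw [norm_smul]
    have h1 : ‖(((n+2).factorial : ℕ) : ℂ)⁻¹‖ = (((n+2).factorial : ℕ) : ℝ)⁻¹ := by
      rw [norm_inv]; norm_num
    rw [h1]
    have h2 : ‖x ^ (n+2)‖ ≤ ‖x‖^(n+2) := norm_pow_le' x (by omega)
    have h3 : (((n+2).factorial : ℕ) : ℝ)⁻¹ ≤ 2⁻¹ := by
      apply inv_anti₀ (by norm_num)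
      exact_mod_cast (Nat.self_le_factorial 2).trans (Nat.factorial_le (by omega))
    calc (((n+2).factorial : ℕ) : ℝ)⁻¹ * ‖x ^ (n+2)‖ ≤ 2⁻¹ * ‖x‖^(n+2) := by
          apply mul_le_mul h3 h2 (norm_nonneg _) (by norm_num)
      _ = ‖x‖^(n+2)/2 := by ring
  have hsum2 : Summable fun n : ℕ => ‖x‖^(n+2) / 2 := by
    have he : (fun n : ℕ => ‖x‖^(n+2)/2) = fun n => (‖x‖^2/2) * ‖x‖^n := by
      funext n; ring
    rw [he]
    exact (summable_geometric_of_lt_one h0 hx).mul_left _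
  calc ‖∑' n : ℕ, (((n+2).factorial : ℕ) : ℂ)⁻¹ • x ^ (n+2)‖
      ≤ ∑' n : ℕ, ‖(((n+2).factorial : ℕ) : ℂ)⁻¹ • x ^ (n+2)‖ :=
        norm_tsum_le_tsum_norm ((summable_nat_add_iff
          (f := fun n => ‖((n.factorial : ℕ) : ℂ)⁻¹ • x ^ n‖) 2).2
          (NormedSpace.norm_expSeries_summable' x))
    _ ≤ ∑' n : ℕ, ‖x‖^(n+2) / 2 := Summable.tsum_le_tsum hmaj ((summable_nat_add_iff
          (f := fun n => ‖((n.factorial : ℕ) : ℂ)⁻¹ • x ^ n‖) 2).2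
          (NormedSpace.norm_expSeries_summable' x)) hsum2
    _ = ‖x‖^2 / (2 * (1 - ‖x‖)) := by
        rw [tsum_div_const]
        have : ∑' n : ℕ, ‖x‖^(n+2) = ‖x‖^2 * (1-‖x‖)⁻¹ := by
          rw [← tsum_geometric_of_lt_one h0 hx, ← tsum_mul_left]
          congr 1; ext n; ring
        have hne : 1 - ‖x‖ ≠ 0 := by linarith
        rw [this]; field_simp

section NormAux
open scoped NNReal
attribute [local instance] Matrix.linftyOpNormedRing Matrix.linftyOpNormedAlgebra

variable {m : Type*} [Fintype m] [DecidableEq m]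

lemma measOrbit.entry_le_linfty (A : Matrix m m ℂ) (i : m) (j : m) : ‖A i j‖ ≤ ‖A‖ := by
  rw [Matrix.linfty_opNorm_def]
  have h1 : ‖A i j‖₊ ≤ ∑ j' : m, ‖A i j'‖₊ :=
    Finset.single_le_sum (f := fun j' => ‖A i j'‖₊) (fun _ _ => zero_le) (Finset.mem_univ j)
  have h2 : (∑ j' : m, ‖A i j'‖₊) ≤ (Finset.univ : Finset m).sup fun i' => ∑ j' : m, ‖A i' j'‖₊ :=
    Finset.le_sup (f := fun i' => ∑ j' : m, ‖A i' j'‖₊) (Finset.mem_univ i)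
  exact_mod_cast h1.trans h2

lemma measOrbit.linfty_le_of_rows (A : Matrix m m ℂ) (c : ℝ) (hc : 0 ≤ c)
    (h : ∀ i, ∑ j : m, ‖A i j‖ ≤ c) : ‖A‖ ≤ c := by
  rw [Matrix.linfty_opNorm_def]
  have : ((Finset.univ : Finset m).sup fun i => ∑ j : m, ‖A i j‖₊ : ℝ≥0) ≤ c.toNNReal := by
    apply Finset.sup_le
    intro i _
    have := h i
    rw [← Real.toNNReal_le_toNNReal_iff hc] at this
    refine le_trans (le_of_eq ?_) this
    rw [Real.toNNReal_sum_of_nonneg (fun j _ => norm_nonneg _)]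
    congr 1; ext j; simp [Real.toNNReal_coe]
  calc ((Finset.univ : Finset m).sup fun i => ∑ j : m, ‖A i j‖₊ : ℝ≥0) ≤ (c.toNNReal : ℝ) := by
        exact_mod_cast this
    _ = c := Real.coe_toNNReal c hc

end NormAux

lemma measOrbit.sq_inv : ((Real.sqrt 2 : ℝ) : ℂ)⁻¹ * ((Real.sqrt 2 : ℝ) : ℂ)⁻¹ = 1/2 := by
  rw [← mul_inv]
  norm_cast
  rw [Real.mul_self_sqrt (by norm_num : (0:ℝ) ≤ 2)]
  norm_num

lemma measOrbit.quadR {r s : ℕ} (a : Fin r) (b : Fin s)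
    (M : Matrix (Fin r ⊕ Fin s) (Fin r ⊕ Fin s) ℂ) :
    dotProduct (star (psiR r s a b)) (M.mulVec (psiR r s a b)) =
    (M (.inl a) (.inl a) + M (.inl a) (.inr b) + M (.inr b) (.inl a) + M (.inr b) (.inr b)) / 2 := by
  simp only [dotProduct, Matrix.mulVec, Pi.star_apply, Fintype.sum_sum_type, psiR,
    mul_ite, mul_zero, ite_mul, zero_mul, Finset.sum_ite_eq', Finset.mem_univ, if_true,
    apply_ite (star : ℂ → ℂ), star_zero]
  have hs : star (((Real.sqrt 2 : ℝ) : ℂ)⁻¹) = ((Real.sqrt 2 : ℝ) : ℂ)⁻¹ := by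
    rw [star_inv₀, Complex.star_def, Complex.conj_ofReal]
  simp only [hs, Finset.sum_ite_eq', Finset.mem_univ, if_true]
  linear_combination (M (.inl a) (.inl a) + M (.inl a) (.inr b) + M (.inr b) (.inl a)
    + M (.inr b) (.inr b)) * measOrbit.sq_inv

lemma measOrbit.quadI {r s : ℕ} (a : Fin r) (b : Fin s)
    (M : Matrix (Fin r ⊕ Fin s) (Fin r ⊕ Fin s) ℂ) :
    dotProduct (star (psiI r s a b)) (M.mulVec (psiI r s a b)) =
    (M (.inl a) (.inl a) + Complex.I * M (.inl a) (.inr b) - Complex.I * M (.inr b) (.inl a)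
      + M (.inr b) (.inr b)) / 2 := by
  simp only [dotProduct, Matrix.mulVec, Pi.star_apply, Fintype.sum_sum_type, psiI,
    mul_ite, mul_zero, ite_mul, zero_mul, Finset.sum_ite_eq', Finset.mem_univ, if_true,
    apply_ite (star : ℂ → ℂ), star_zero]
  have hs : star (((Real.sqrt 2 : ℝ) : ℂ)⁻¹) = ((Real.sqrt 2 : ℝ) : ℂ)⁻¹ := by
    rw [star_inv₀, Complex.star_def, Complex.conj_ofReal]
  have hsI : star (Complex.I * ((Real.sqrt 2 : ℝ) : ℂ)⁻¹) = -Complex.I * ((Real.sqrt 2 : ℝ) : ℂ)⁻¹ := by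
    rw [star_mul', hs, Complex.star_def, Complex.conj_I, neg_mul]
  simp only [hs, hsI, Finset.sum_ite_eq', Finset.mem_univ, if_true]
  linear_combination (M (.inl a) (.inl a) + Complex.I * M (.inl a) (.inr b)
    - Complex.I * M (.inr b) (.inl a) + M (.inr b) (.inr b)
    ) * measOrbit.sq_inv + (-(((Real.sqrt 2 : ℝ) : ℂ)⁻¹^2 * M (.inr b) (.inr b))) * Complex.I_sq

set_option maxHeartbeats 1000000 in
lemma measOrbit.arith_key (x rr a e e' f : ℝ) (hx : 2 ≤ x) (hrr : 0 ≤ rr) (hrr2 : rr ≤ x/2)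
    (ha0 : 0 ≤ a) (ha : a ≤ 9/(32*x)) (he0 : 0 ≤ e) (he : e ≤ a^2/(2*(1-a)))
    (he'0 : 0 ≤ e') (he' : e' ≤ a^2/(2*(1-a)))
    (hf : f ≤ e + a*e + e' + e'*a + e'*e) :
    2*f + rr*(1/(4*x^2))^2 < 1/(4*x^2) := by
  have hx0 : (0:ℝ) < x := by linarith
  obtain ⟨u, hu⟩ : ∃ u : ℝ, u = 1/x^2 := ⟨_, rfl⟩
  have hu0 : 0 < u := by rw [hu]; positivity
  have ht4 : 1/(4*x^2) = u/4 := by rw [hu]; ring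
  have hxu : x * u = 1/x := by rw [hu]; field_simp
  have hxu2 : x * u ≤ 1/2 := by
    rw [hxu]; rw [div_le_div_iff₀ hx0 (by norm_num)]; linarith
  have haa : a ≤ 9/64 := by
    refine ha.trans ?_
    rw [div_le_div_iff₀ (by positivity) (by norm_num)]; nlinarith
  have h1a : (55:ℝ)/64 ≤ 1 - a := by linarith
  have hd : a^2/(2*(1-a)) ≤ (32/55)*a^2 := by
    rw [div_le_iff₀ (by linarith)]
    nlinarith [sq_nonneg a]
  have he1 : e ≤ (32/55)*a^2 := he.trans hd
  have he'1 : e' ≤ (32/55)*a^2 := he'.trans hd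
  have ha2u : a^2 ≤ (81/1024)*u := by
    have h1 : a^2 ≤ (9/(32*x))^2 := by nlinarith
    have h2 : (9/(32*x))^2 = (81/1024)*u := by rw [hu]; field_simp; ring
    exact h1.trans_eq h2
  have ha2abs : a^2 ≤ 81/4096 := by nlinarith
  have hae : a*e ≤ (9/64)*((32/55)*a^2) := by
    calc a*e ≤ (9/64)*e := mul_le_mul_of_nonneg_right haa he0
      _ ≤ (9/64)*((32/55)*a^2) := by linarith
  have hae' : e'*a ≤ (9/64)*((32/55)*a^2) := by
    calc e'*a = a*e' := by ring
      _ ≤ (9/64)*e' := mul_le_mul_of_nonneg_right haa he'0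
      _ ≤ (9/64)*((32/55)*a^2) := by linarith
  have hee' : e'*e ≤ (32/55)^2*(a^2*a^2) := by
    calc e'*e ≤ ((32/55)*a^2)*((32/55)*a^2) :=
          mul_le_mul he'1 he1 he0 (by positivity)
      _ = (32/55)^2*(a^2*a^2) := by ring
  have ha4 : a^2*a^2 ≤ (81/4096)*a^2 := by nlinarith [sq_nonneg a]
  have hfb : f ≤ (16141/12100)*a^2 := by linarith
  have hfu : 2*f ≤ (16141/6050)*((81/1024)*u) := by linarith
  have hrru : rr*(u/4)^2 ≤ u/64 := by
    have h1 : rr*u^2 ≤ (x/2)*u^2 := mul_le_mul_of_nonneg_right hrr2 (sq_nonneg u)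
    have h2 : x*u^2 ≤ (1/2)*u := by
      have := mul_le_mul_of_nonneg_right hxu2 hu0.le
      calc x*u^2 = (x*u)*u := by ring
        _ ≤ (1/2)*u := this
    have h3 : rr*(u/4)^2 = (rr*u^2)/16 := by ring
    rw [h3]; linarith only [h1, h2]
  rw [ht4]
  linarith only [hfu, hrru, hu0]

set_option maxHeartbeats 4000000 in
set_option synthInstance.maxHeartbeats 1000000 in
/-- measurement-orbit shattering. -/
theorem measurement_orbit_shattering (n r s : ℕ) (hn : 2 ≤ n)
    (hr : r = n / 2) (hs : s = (n + 1) / 2)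
    (ηR ηI : Fin r → Fin s → ℝ)
    (hηR : ∀ a b, ηR a b = 1 ∨ ηR a b = -1)
    (hηI : ∀ a b, ηI a b = 1 ∨ ηI a b = -1)
    (X : Matrix (Fin r) (Fin s) ℂ)
    (hX : X = fun a b => ((ηR a b : ℝ) : ℂ) - Complex.I * ((ηI a b : ℝ) : ℂ))
    (K : Matrix (Fin r ⊕ Fin s) (Fin r ⊕ Fin s) ℂ)
    (hK : K = Matrix.fromBlocks 0 X (-(Xᴴ)) 0)
    (U : Matrix (Fin r ⊕ Fin s) (Fin r ⊕ Fin s) ℂ)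
    (hU : U = NormedSpace.exp ((1 / (4 * (n : ℝ) ^ 2)) • K)) :
    ∀ (a : Fin r) (b : Fin s),
      ((dotProduct (star (psiR r s a b))
          ((Uᴴ * blockProj r s * U).mulVec (psiR r s a b))).re > 1 / 2 ↔ ηR a b = 1) ∧
      ((dotProduct (star (psiI r s a b))
          ((Uᴴ * blockProj r s * U).mulVec (psiI r s a b))).re > 1 / 2 ↔ ηI a b = 1) := by
  intro a b
  letI : NormedRing (Matrix (Fin r ⊕ Fin s) (Fin r ⊕ Fin s) ℂ) := Matrix.linftyOpNormedRing
  letI : NormedAlgebra ℂ (Matrix (Fin r ⊕ Fin s) (Fin r ⊕ Fin s) ℂ) :=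
    Matrix.linftyOpNormedAlgebra
  have hr1 : 1 ≤ r := by omega
  have hs1 : 1 ≤ s := by omega
  haveI : Nonempty (Fin r ⊕ Fin s) := ⟨Sum.inl ⟨0, hr1⟩⟩
  have hrs : r ≤ s := by omega
  have hnR : (2:ℝ) ≤ (n:ℝ) := by exact_mod_cast hn
  have hn0 : (0:ℝ) < (n:ℝ) := by linarith
  obtain ⟨t, ht⟩ : ∃ t:ℝ, t = 1/(4*(n:ℝ)^2) := ⟨_, rfl⟩
  rw [← ht] at hU
  have ht0 : 0 < t := by rw [ht]; positivity
  -- entries of X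
  have hXsq : ∀ (a' : Fin r) (b' : Fin s), (starRingEnd ℂ) (X a' b') * X a' b' = 2 := by
    intro a' b'
    rw [hX]
    simp only [map_sub, map_mul, Complex.conj_ofReal, Complex.conj_I]
    have h1 : ((ηR a' b' : ℝ) : ℂ)^2 = 1 := by
      rcases hηR a' b' with h|h <;> rw [h] <;> norm_num
    have h2 : ((ηI a' b' : ℝ) : ℂ)^2 = 1 := by
      rcases hηI a' b' with h|h <;> rw [h] <;> norm_num
    linear_combination h1 + h2 - ((ηI a' b' : ℝ) : ℂ)^2 * Complex.I_sq
  have hXe : ∀ (a' : Fin r) (b' : Fin s), ‖X a' b'‖ ≤ 3/2 := by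
    intro a' b'
    have h1 : ‖X a' b'‖^2 = 2 := by
      have := hXsq a' b'
      have h2 : ((‖X a' b'‖^2 : ℝ) : ℂ) = 2 := by
        rw [Complex.sq_norm, Complex.normSq_eq_conj_mul_self]
        exact this
      exact_mod_cast h2
    nlinarith [norm_nonneg (X a' b')]
  -- norm of K
  have hKnorm : ‖K‖ ≤ 3/2 * (s:ℝ) := by
    apply measOrbit.linfty_le_of_rows _ _ (by positivity)
    intro i
    rw [hK]
    cases i with
    | inl a' =>
      rw [Fintype.sum_sum_type]
      simp only [Matrix.fromBlocks_apply₁₁, Matrix.fromBlocks_apply₁₂, Matrix.zero_apply,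
        norm_zero, Finset.sum_const_zero, zero_add]
      calc ∑ b' : Fin s, ‖X a' b'‖ ≤ ∑ _b' : Fin s, (3/2 : ℝ) :=
            Finset.sum_le_sum (fun b' _ => hXe a' b')
        _ = 3/2 * (s:ℝ) := by simp [mul_comm]
    | inr b' =>
      rw [Fintype.sum_sum_type]
      simp only [Matrix.fromBlocks_apply₂₁, Matrix.fromBlocks_apply₂₂, Matrix.zero_apply,
        norm_zero, Finset.sum_const_zero, add_zero, Matrix.neg_apply, Matrix.conjTranspose_apply,
        norm_neg]
      calc ∑ a' : Fin r, ‖(starRingEnd ℂ) (X a' b')‖ ≤ ∑ _a' : Fin r, (3/2 : ℝ) := by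
            apply Finset.sum_le_sum
            intro a' _
            rw [RCLike.norm_conj]
            exact hXe a' b'
        _ = 3/2 * (r:ℝ) := by simp [mul_comm]
        _ ≤ 3/2 * (s:ℝ) := by
            have : (r:ℝ) ≤ (s:ℝ) := by exact_mod_cast hrs
            linarith
  -- the generator A
  obtain ⟨A, hA⟩ : ∃ A, A = t • K := ⟨_, rfl⟩
  rw [← hA] at hU
  have hsle : (s:ℝ) ≤ 3*(n:ℝ)/4 := by
    have h1 : (s:ℝ) ≤ ((n:ℝ)+1)/2 := by
      rw [hs]
      have := Nat.cast_div_le (α := ℝ) (m := n+1) (n := 2)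
      push_cast at this ⊢
      linarith
    linarith
  have hAnorm : ‖A‖ ≤ 9/(32*(n:ℝ)) := by
    rw [hA, norm_smul, Real.norm_eq_abs, abs_of_pos ht0]
    calc t * ‖K‖ ≤ t * (3/2 * (s:ℝ)) := by
          apply mul_le_mul_of_nonneg_left hKnorm ht0.le
      _ ≤ t * (3/2 * (3*(n:ℝ)/4)) := by
          apply mul_le_mul_of_nonneg_left _ ht0.le
          linarith
      _ = 9/(32*(n:ℝ)) := by rw [ht]; field_simp; ring
  have hA164 : 9/(32*(n:ℝ)) ≤ 9/64 := by
    rw [div_le_div_iff₀ (by positivity) (by norm_num)]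
    nlinarith
  have hA1 : ‖A‖ < 1 := by
    have := hAnorm.trans hA164
    linarith
  -- conjugate transpose of A
  have hKH : Kᴴ = -K := by
    rw [hK, Matrix.fromBlocks_conjTranspose, Matrix.fromBlocks_neg]
    simp
  have hAH : Aᴴ = -A := by
    rw [hA, Matrix.conjTranspose_smul, hKH, smul_neg, star_trivial]
  have hUH : Uᴴ = NormedSpace.exp (-A) := by
    rw [hU, ← Matrix.exp_conjTranspose, hAH]
  -- remainders
  obtain ⟨E, hE⟩ : ∃ E, E = U - 1 - A := ⟨_, rfl⟩
  obtain ⟨E', hE'⟩ : ∃ E', E' = Uᴴ - 1 + A := ⟨_, rfl⟩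
  have hEnorm : ‖E‖ ≤ ‖A‖^2/(2*(1-‖A‖)) := by
    rw [hE, hU]
    exact measOrbit.exp_tail A hA1
  have hE'norm : ‖E'‖ ≤ ‖A‖^2/(2*(1-‖A‖)) := by
    have h := measOrbit.exp_tail (-A) (by rwa [norm_neg])
    rw [norm_neg] at h
    have h2 : NormedSpace.exp (-A) - 1 - (-A) = E' := by
      rw [hE', hUH]; abel
    convert h using 2
    exact h2.symm
  obtain ⟨P, hP⟩ : ∃ P, P = blockProj r s := ⟨_, rfl⟩
  rw [← hP]
  have hPnorm : ‖P‖ ≤ 1 := by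
    apply measOrbit.linfty_le_of_rows _ _ (by norm_num)
    intro i
    rw [hP, blockProj]
    cases i with
    | inl a' =>
      rw [Fintype.sum_sum_type]
      simp only [Matrix.fromBlocks_apply₁₁, Matrix.fromBlocks_apply₁₂, Matrix.zero_apply,
        norm_zero, Finset.sum_const_zero, add_zero, Matrix.one_apply]
      simp [apply_ite (norm : ℂ → ℝ), Finset.sum_ite_eq, Finset.sum_ite_eq']
    | inr b' =>
      rw [Fintype.sum_sum_type]
      simp
  obtain ⟨F, hF⟩ : ∃ F, F = P*E - A*(P*E) + E'*P + E'*(P*A) + E'*(P*E) := ⟨_, rfl⟩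
  have hM : Uᴴ * P * U = P + (P*A - A*P) - A*(P*A) + F := by
    have h1 : U = 1 + A + E := by rw [hE]; abel
    have h2 : Uᴴ = 1 - A + E' := by rw [hE']; abel
    rw [h2, h1, hF]
    noncomm_ring
  have hFnorm : ‖F‖ ≤ ‖E‖ + ‖A‖*‖E‖ + ‖E'‖ + ‖E'‖*‖A‖ + ‖E'‖*‖E‖ := by
    have hPE : ‖P*E‖ ≤ ‖E‖ := by
      calc ‖P*E‖ ≤ ‖P‖*‖E‖ := norm_mul_le _ _
        _ ≤ 1*‖E‖ := mul_le_mul_of_nonneg_right hPnorm (norm_nonneg _)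
        _ = ‖E‖ := one_mul _
    have hPA : ‖P*A‖ ≤ ‖A‖ := by
      calc ‖P*A‖ ≤ ‖P‖*‖A‖ := norm_mul_le _ _
        _ ≤ 1*‖A‖ := mul_le_mul_of_nonneg_right hPnorm (norm_nonneg _)
        _ = ‖A‖ := one_mul _
    have h1 : ‖A*(P*E)‖ ≤ ‖A‖*‖E‖ :=
      (norm_mul_le _ _).trans (mul_le_mul_of_nonneg_left hPE (norm_nonneg _))
    have h2 : ‖E'*P‖ ≤ ‖E'‖ := by
      calc ‖E'*P‖ ≤ ‖E'‖*‖P‖ := norm_mul_le _ _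
        _ ≤ ‖E'‖*1 := mul_le_mul_of_nonneg_left hPnorm (norm_nonneg _)
        _ = ‖E'‖ := mul_one _
    have h3 : ‖E'*(P*A)‖ ≤ ‖E'‖*‖A‖ :=
      (norm_mul_le _ _).trans (mul_le_mul_of_nonneg_left hPA (norm_nonneg _))
    have h4 : ‖E'*(P*E)‖ ≤ ‖E'‖*‖E‖ :=
      (norm_mul_le _ _).trans (mul_le_mul_of_nonneg_left hPE (norm_nonneg _))
    rw [hF]
    calc ‖P*E - A*(P*E) + E'*P + E'*(P*A) + E'*(P*E)‖
        ≤ ‖P*E - A*(P*E) + E'*P + E'*(P*A)‖ + ‖E'*(P*E)‖ := norm_add_le _ _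
      _ ≤ ‖P*E - A*(P*E) + E'*P‖ + ‖E'*(P*A)‖ + ‖E'*(P*E)‖ := by
          have := norm_add_le (P*E - A*(P*E) + E'*P) (E'*(P*A))
          linarith
      _ ≤ ‖P*E - A*(P*E)‖ + ‖E'*P‖ + ‖E'*(P*A)‖ + ‖E'*(P*E)‖ := by
          have := norm_add_le (P*E - A*(P*E)) (E'*P)
          linarith
      _ ≤ ‖P*E‖ + ‖A*(P*E)‖ + ‖E'*P‖ + ‖E'*(P*A)‖ + ‖E'*(P*E)‖ := by
          have := norm_sub_le (P*E) (A*(P*E))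
          linarith
      _ ≤ ‖E‖ + ‖A‖*‖E‖ + ‖E'‖ + ‖E'‖*‖A‖ + ‖E'‖*‖E‖ := by linarith
  -- block structure computations
  have hPA : P*A = t • Matrix.fromBlocks 0 X 0 0 := by
    rw [hP, hA, hK, blockProj, Matrix.mul_smul, Matrix.fromBlocks_multiply]
    congr 1 <;> simp
  have hAP : A*P = t • Matrix.fromBlocks 0 0 (-(Xᴴ)) 0 := by
    rw [hP, hA, hK, blockProj, Matrix.smul_mul, Matrix.fromBlocks_multiply]
    congr 1 <;> simp
  have hAPA : A*(P*A) = (t*t) • Matrix.fromBlocks 0 0 0 (-(Xᴴ*X)) := by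
    rw [hPA, hA, Matrix.smul_mul, Matrix.mul_smul, smul_smul, hK, Matrix.fromBlocks_multiply]
    congr 1 <;> simp [Matrix.neg_mul]
  -- entry of XᴴX
  have hXX : (Xᴴ*X) b b = ((2*(r:ℝ) : ℝ) : ℂ) := by
    rw [Matrix.mul_apply]
    have : ∀ a' : Fin r, (Xᴴ) b a' * X a' b = 2 := by
      intro a'
      rw [Matrix.conjTranspose_apply]
      exact hXsq a' b
    rw [Finset.sum_congr rfl (fun a' _ => this a')]
    simp [Finset.sum_const, Finset.card_univ]
    push_cast
    ring
  -- the four entries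
  have e11 : (Uᴴ*P*U) (Sum.inl a) (Sum.inl a) = 1 + F (Sum.inl a) (Sum.inl a) := by
    rw [hM]
    simp only [Matrix.add_apply, Matrix.sub_apply]
    rw [hAPA, hPA, hAP, hP]
    simp [blockProj, Matrix.smul_apply, Matrix.one_apply_eq]
  have e12 : (Uᴴ*P*U) (Sum.inl a) (Sum.inr b) = (t:ℂ) * X a b + F (Sum.inl a) (Sum.inr b) := by
    rw [hM]
    simp only [Matrix.add_apply, Matrix.sub_apply]
    rw [hAPA, hPA, hAP, hP]
    simp [blockProj, Matrix.smul_apply, Complex.real_smul]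
  have e21 : (Uᴴ*P*U) (Sum.inr b) (Sum.inl a) =
      (t:ℂ) * (starRingEnd ℂ) (X a b) + F (Sum.inr b) (Sum.inl a) := by
    rw [hM]
    simp only [Matrix.add_apply, Matrix.sub_apply]
    rw [hAPA, hPA, hAP, hP]
    simp [blockProj, Matrix.smul_apply, Complex.real_smul, Matrix.conjTranspose_apply]
  have e22 : (Uᴴ*P*U) (Sum.inr b) (Sum.inr b) =
      (t:ℂ)*(t:ℂ)*((2*(r:ℝ) : ℝ) : ℂ) + F (Sum.inr b) (Sum.inr b) := by
    rw [hM]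
    simp only [Matrix.add_apply, Matrix.sub_apply]
    rw [hAPA, hPA, hAP, hP]
    simp [blockProj, Matrix.smul_apply, Complex.real_smul, hXX]
  -- re/im of X a b
  have hXre : (X a b).re = ηR a b := by rw [hX]; simp
  have hconj : X a b + (starRingEnd ℂ) (X a b) = 2*((ηR a b : ℝ) : ℂ) := by
    rw [Complex.add_conj, hXre]; push_cast; ring
  have hIconj : Complex.I * X a b - Complex.I * (starRingEnd ℂ) (X a b)
      = 2*((ηI a b : ℝ) : ℂ) := by
    rw [hX]
    simp only [map_sub, map_mul, Complex.conj_ofReal, Complex.conj_I]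
    push_cast
    linear_combination (-2*((ηI a b : ℝ) : ℂ)) * Complex.I_sq
  -- value formulas
  obtain ⟨wR, hwRdef⟩ : ∃ w : ℂ, w = F (Sum.inl a) (Sum.inl a) + F (Sum.inl a) (Sum.inr b)
      + F (Sum.inr b) (Sum.inl a) + F (Sum.inr b) (Sum.inr b) := ⟨_, rfl⟩
  obtain ⟨wI, hwIdef⟩ : ∃ w : ℂ, w = F (Sum.inl a) (Sum.inl a)
      + Complex.I * F (Sum.inl a) (Sum.inr b)
      - Complex.I * F (Sum.inr b) (Sum.inl a) + F (Sum.inr b) (Sum.inr b) := ⟨_, rfl⟩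
  have hre2 : ∀ (c : ℝ) (w : ℂ), (((c:ℝ):ℂ) + w).re = c + w.re := by
    intro c w; simp
  have hvalR : (dotProduct (star (psiR r s a b))
      ((Uᴴ * P * U).mulVec (psiR r s a b))).re
      = (1 + 2*t*(ηR a b) + 2*(t*t)*(r:ℝ) + wR.re)/2 := by
    rw [measOrbit.quadR a b, e11, e12, e21, e22]
    have hz : 1 + ((t:ℂ) * X a b + F (Sum.inl a) (Sum.inr b))
        + ((t:ℂ) * (starRingEnd ℂ) (X a b) + F (Sum.inr b) (Sum.inl a))
        + ((t:ℂ)*(t:ℂ)*((2*(r:ℝ) : ℝ) : ℂ) + F (Sum.inr b) (Sum.inr b))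
        + F (Sum.inl a) (Sum.inl a)
        = ((1 + 2*t*(ηR a b) + 2*(t*t)*(r:ℝ) : ℝ) : ℂ) + wR := by
      rw [hwRdef]
      push_cast
      linear_combination (t:ℂ) * hconj
    have hz2 : (1 + F (Sum.inl a) (Sum.inl a) + ((t:ℂ) * X a b + F (Sum.inl a) (Sum.inr b))
        + ((t:ℂ) * (starRingEnd ℂ) (X a b) + F (Sum.inr b) (Sum.inl a))
        + ((t:ℂ)*(t:ℂ)*((2*(r:ℝ) : ℝ) : ℂ) + F (Sum.inr b) (Sum.inr b)))
        = ((1 + 2*t*(ηR a b) + 2*(t*t)*(r:ℝ) : ℝ) : ℂ) + wR := by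
      rw [← hz]; ring
    rw [hz2]
    rw [show ((2:ℂ)) = ((2:ℝ):ℂ) by norm_num, Complex.div_ofReal_re, hre2]
  have hvalI : (dotProduct (star (psiI r s a b))
      ((Uᴴ * P * U).mulVec (psiI r s a b))).re
      = (1 + 2*t*(ηI a b) + 2*(t*t)*(r:ℝ) + wI.re)/2 := by
    rw [measOrbit.quadI a b, e11, e12, e21, e22]
    have hz2 : (1 + F (Sum.inl a) (Sum.inl a)
        + Complex.I * ((t:ℂ) * X a b + F (Sum.inl a) (Sum.inr b))
        - Complex.I * ((t:ℂ) * (starRingEnd ℂ) (X a b) + F (Sum.inr b) (Sum.inl a))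
        + ((t:ℂ)*(t:ℂ)*((2*(r:ℝ) : ℝ) : ℂ) + F (Sum.inr b) (Sum.inr b)))
        = ((1 + 2*t*(ηI a b) + 2*(t*t)*(r:ℝ) : ℝ) : ℂ) + wI := by
      rw [hwIdef]
      push_cast
      linear_combination (t:ℂ) * hIconj
    rw [hz2]
    rw [show ((2:ℂ)) = ((2:ℝ):ℂ) by norm_num, Complex.div_ofReal_re, hre2]
  -- bounds on the error terms
  have hFb : ∀ i j, ‖F i j‖ ≤ ‖F‖ := fun i j => measOrbit.entry_le_linfty F i j
  have hwR : |wR.re| ≤ 4*‖F‖ := by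
    calc |wR.re| ≤ ‖wR‖ := Complex.abs_re_le_norm wR
      _ ≤ 4*‖F‖ := by
        rw [hwRdef]
        calc ‖(F (Sum.inl a) (Sum.inl a) + F (Sum.inl a) (Sum.inr b)
              + F (Sum.inr b) (Sum.inl a) + F (Sum.inr b) (Sum.inr b))‖
            ≤ ‖F (Sum.inl a) (Sum.inl a)‖ + ‖F (Sum.inl a) (Sum.inr b)‖
              + ‖F (Sum.inr b) (Sum.inl a)‖ + ‖F (Sum.inr b) (Sum.inr b)‖ := by
              have g1 := norm_add_le (F (Sum.inl a) (Sum.inl a) + F (Sum.inl a) (Sum.inr b)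
                + F (Sum.inr b) (Sum.inl a)) (F (Sum.inr b) (Sum.inr b))
              have g2 := norm_add_le (F (Sum.inl a) (Sum.inl a) + F (Sum.inl a) (Sum.inr b))
                (F (Sum.inr b) (Sum.inl a))
              have g3 := norm_add_le (F (Sum.inl a) (Sum.inl a)) (F (Sum.inl a) (Sum.inr b))
              linarith
          _ ≤ 4*‖F‖ := by
              have := hFb (Sum.inl a) (Sum.inl a)
              have := hFb (Sum.inl a) (Sum.inr b)
              have := hFb (Sum.inr b) (Sum.inl a)
              have := hFb (Sum.inr b) (Sum.inr b)
              linarith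
  have hwI : |wI.re| ≤ 4*‖F‖ := by
    have hI1 : ‖Complex.I * F (Sum.inl a) (Sum.inr b)‖ = ‖F (Sum.inl a) (Sum.inr b)‖ := by
      rw [norm_mul, Complex.norm_I, one_mul]
    have hI2 : ‖Complex.I * F (Sum.inr b) (Sum.inl a)‖ = ‖F (Sum.inr b) (Sum.inl a)‖ := by
      rw [norm_mul, Complex.norm_I, one_mul]
    calc |wI.re| ≤ ‖wI‖ := Complex.abs_re_le_norm wI
      _ ≤ 4*‖F‖ := by
        rw [hwIdef]
        calc ‖(F (Sum.inl a) (Sum.inl a) + Complex.I * F (Sum.inl a) (Sum.inr b)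
              - Complex.I * F (Sum.inr b) (Sum.inl a) + F (Sum.inr b) (Sum.inr b))‖
            ≤ ‖F (Sum.inl a) (Sum.inl a)‖ + ‖F (Sum.inl a) (Sum.inr b)‖
              + ‖F (Sum.inr b) (Sum.inl a)‖ + ‖F (Sum.inr b) (Sum.inr b)‖ := by
              have g1 := norm_add_le (F (Sum.inl a) (Sum.inl a)
                + Complex.I * F (Sum.inl a) (Sum.inr b)
                - Complex.I * F (Sum.inr b) (Sum.inl a)) (F (Sum.inr b) (Sum.inr b))
              have g2 := norm_sub_le (F (Sum.inl a) (Sum.inl a)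
                + Complex.I * F (Sum.inl a) (Sum.inr b))
                (Complex.I * F (Sum.inr b) (Sum.inl a))
              have g3 := norm_add_le (F (Sum.inl a) (Sum.inl a))
                (Complex.I * F (Sum.inl a) (Sum.inr b))
              rw [hI1] at g3
              rw [hI2] at g2
              linarith
          _ ≤ 4*‖F‖ := by
              have := hFb (Sum.inl a) (Sum.inl a)
              have := hFb (Sum.inl a) (Sum.inr b)
              have := hFb (Sum.inr b) (Sum.inl a)
              have := hFb (Sum.inr b) (Sum.inr b)
              linarith
  -- arithmetic
  have hrle : (r:ℝ) ≤ (n:ℝ)/2 := by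
    rw [hr]
    have := Nat.cast_div_le (α := ℝ) (m := n) (n := 2)
    push_cast at this ⊢
    linarith
  have harith := measOrbit.arith_key (n:ℝ) (r:ℝ) ‖A‖ ‖E‖ ‖E'‖ ‖F‖ hnR
    (by positivity) hrle (norm_nonneg A) hAnorm (norm_nonneg E) hEnorm
    (norm_nonneg E') hE'norm hFnorm
  rw [← ht] at harith
  have ht2 : t^2 = t*t := sq t
  rw [ht2] at harith
  have hrt : 0 ≤ (r:ℝ)*(t*t) := by positivity
  have hwRle := abs_le.mp hwR
  have hwIle := abs_le.mp hwI
  constructor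
  · rcases hηR a b with h|h
    · refine ⟨fun _ => h, fun _ => ?_⟩
      rw [hvalR, h]
      nlinarith [hwRle.1, harith, hrt]
    · constructor
      · intro hgt
        exfalso
        rw [hvalR, h] at hgt
        nlinarith [hwRle.2, harith, hrt]
      · intro h1
        rw [h] at h1
        norm_num at h1
  · rcases hηI a b with h|h
    · refine ⟨fun _ => h, fun _ => ?_⟩
      rw [hvalI, h]
      nlinarith [hwIle.1, harith, hrt]
    · constructor
      · intro hgt
        exfalso
        rw [hvalI, h] at hgt
        nlinarith [hwIle.2, harith, hrt]
      · intro h1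
        rw [h] at h1
        norm_num at h1
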